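/- For every finitely supported permutation w, the Schubert polynomials satisfy the recursion 𝔖_w = R₁𝔖_w + Σ_{i ∈ Des(w)} x_i·R_i(𝔖_{w s_i}), and also the variant 𝔖_w = R₁𝔖_w + Σ_{i ∈ Des(w)} x_i·R_{i+1}(𝔖_{w s_i}). -/

import Mathlib

/-
Conventions: `Pol = MvPolynomial ℕ ℤ` with the Lean variable `X i` representing
the paper's variable `x_{i+1}` (0-indexed).  All operators carrying a paper index
`i ≥ 1` are represented by Lean operators indexed by `i : ℕ` (Lean `i` ↔ paper `i+1`),
and sequences of positive integers are represented by sequences of natural numbers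
(entry `v` ↔ paper entry `v+1`).
-/

open MvPolynomial
open scoped Classical

abbrev Pol := MvPolynomial ℕ ℤ

noncomputable section

/-- Interchange the variables `x_{i+1}` and `x_{i+2}` (paper indexing). -/
def swapVar (i : ℕ) (f : Pol) : Pol := rename (Equiv.swap i (i+1)) f

/-- Exact division: the unique `g` with `d * g = f` when it exists (`0` otherwise). -/
def exactDiv (d f : Pol) : Pol := if h : ∃ g : Pol, d * g = f then h.choose else 0

/-- The divided difference operator `∂_{i+1}` (paper indexing). -/
def ddiff (i : ℕ) (f : Pol) : Pol := exactDiv (X i - X (i+1)) (f - swapVar i f)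

/-- The Bergeron–Sottile operator `R_{i+1}` (paper indexing): `x_j ↦ x_j` for
`j < i+1`, `x_{i+1} ↦ 0`, `x_j ↦ x_{j-1}` for `j > i+1`. -/
def BS (i : ℕ) : Pol →ₐ[ℤ] Pol :=
  aeval fun j => if j < i then X j else if j = i then 0 else X (j-1)

/-- `m`-fold iterate of `BS i`. -/
def BSit (i m : ℕ) (f : Pol) : Pol := (fun g => BS i g)^[m] f

/-- `Z g = Σ_{k ≥ 0} R₁ᵏ g`. -/
def Zop (f : Pol) : Pol := ∑ᶠ k : ℕ, BSit 0 k f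

/-- `Z^{(m)} g = Σ_{k ≥ 0} R₁^{km} g`. -/
def Zm (m : ℕ) (f : Pol) : Pol := ∑ᶠ k : ℕ, BSit 0 (k * m) f

/-- The truncation operator keeping the first `n` variables: `Π_n` in paper indexing. -/
def truncOp (n : ℕ) : Pol →ₐ[ℤ] Pol := aeval fun j => if j < n then X j else 0

/-- The quasisymmetric divided difference `T_{i+1}` defined as the exact quotient
`((R_{i+2} - R_{i+1})f)/x_{i+1}` (paper indexing). -/
def TqDiv (i : ℕ) (f : Pol) : Pol := exactDiv (X i) (BS (i+1) f - BS i f)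

/-- The quasisymmetric divided difference `T_{i+1} = R_{i+1} ∘ ∂_{i+1}` (paper indexing). -/
def Tq (i : ℕ) (f : Pol) : Pol := BS i (ddiff i f)

/-- The `m`-quasisymmetric divided difference `T^{(m)}_{i+1}` (paper indexing). -/
def Tm (m i : ℕ) (f : Pol) : Pol := exactDiv (X i) (BSit (i+1) m f - BSit i m f)

/-- The slide extractor `D_{i+1} = Π_{i+1} ∘ ∂_{i+1}` (paper indexing). -/
def Dop (i : ℕ) (f : Pol) : Pol := truncOp (i+1) (ddiff i f)

/-- The `m`-slide extractor `D^{(m)}_{i+1} = Π_{i+1} ∘ T^{(m)}_{i+1}` (paper indexing). -/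
def Dm (m i : ℕ) (f : Pol) : Pol := truncOp (i+1) (Tm m i f)

/-- The slide creator `B_{i+1} f = Σ_{k=1}^{i+1} x_k · R_k^{i+1-k}(Π_{i+1} f)` (paper indexing). -/
def Bop (i : ℕ) (f : Pol) : Pol :=
  ∑ k ∈ Finset.range (i+1), X k * BSit k (i - k) (truncOp (i+1) f)

/-- The creation operator `Z ∘ x_{i+1} ∘ R_{i+1}` (paper indexing). -/
def crea (i : ℕ) (f : Pol) : Pol := Zop (X i * BS i f)

/-- A permutation of `{0,1,2,…}` is finitely supported if it fixes all but
finitely many points. -/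
def FinSupp (w : Equiv.Perm ℕ) : Prop := Set.Finite {x | w x ≠ x}

/-- Coxeter length: the minimal `k` such that `w` is a product of `k` simple
transpositions. -/
def len (w : Equiv.Perm ℕ) : ℕ :=
  sInf {k | ∃ l : List ℕ, l.length = k ∧ (l.map fun i => Equiv.swap i (i+1)).prod = w}

/-- The set of reduced words for `w`. -/
def Red (w : Equiv.Perm ℕ) : Set (List ℕ) :=
  {l | l.length = len w ∧ (l.map fun i => Equiv.swap i (i+1)).prod = w}

/-- A family of polynomials indexed by permutations is a family of Schubert
polynomials if: each member is homogeneous of degree the length, the identity is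
sent to `1`, and divided differences act as expected (all this for finitely
supported permutations). -/
def IsSchubertFamily (S : Equiv.Perm ℕ → Pol) : Prop :=
  (∀ w, FinSupp w → (S w).IsHomogeneous (len w)) ∧
  S 1 = 1 ∧
  ∀ w, FinSupp w → ∀ i : ℕ,
    ddiff i (S w) = if w (i+1) < w i then S (w * Equiv.swap i (i+1)) else 0

/-- `b` is a compatible sequence for `a`. -/
def Compat {k : ℕ} (a b : Fin k → ℕ) : Prop :=
  Monotone b ∧ (∀ j, b j ≤ a j) ∧
  ∀ (j : ℕ) (h : j + 1 < k),
    a ⟨j, Nat.lt_of_succ_lt h⟩ < a ⟨j+1, h⟩ → b ⟨j, Nat.lt_of_succ_lt h⟩ < b ⟨j+1, h⟩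

/-- The slide polynomial `𝔉_a`, as the sum of the monomials of all compatible
sequences for `a`. -/
def slide {k : ℕ} (a : Fin k → ℕ) : Pol :=
  ∑ᶠ b ∈ {b : Fin k → ℕ | Compat a b}, ∏ j, X (b j)

/-- `b` is an `m`-compatible sequence for `a` (entrywise congruent mod `m`). -/
def MCompat (m : ℕ) {k : ℕ} (a b : Fin k → ℕ) : Prop :=
  Monotone b ∧ (∀ j, b j ≤ a j ∧ b j % m = a j % m) ∧
  ∀ (j : ℕ) (h : j + 1 < k),
    a ⟨j, Nat.lt_of_succ_lt h⟩ < a ⟨j+1, h⟩ → b ⟨j, Nat.lt_of_succ_lt h⟩ < b ⟨j+1, h⟩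

/-- The `m`-slide polynomial `𝔉ᵐ_a`. -/
def mslide (m : ℕ) {k : ℕ} (a : Fin k → ℕ) : Pol :=
  ∑ᶠ b ∈ {b : Fin k → ℕ | MCompat m a b}, ∏ j, X (b j)

/-- Value of the `m`-slide creator `B^{(m)}_{a+1}` (paper indexing) on the monomial with
exponent vector `d`. -/
def BmMono (m a : ℕ) (d : ℕ →₀ ℕ) : Pol :=
  if ∃ t, a < t ∧ d t ≠ 0 then 0
  else monomial (d.erase a) 1 *
    ∑ r ∈ Finset.range (a+1),
      if r * m ≤ a ∧ ∀ t, t < a → d t ≠ 0 → t < a - r * m then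
        X (a - r * m) ^ (d a + 1) else 0

/-- The `m`-slide creator `B^{(m)}_{a+1}` (paper indexing), extended linearly from
its values on monomials. -/
def Bm (m a : ℕ) (f : Pol) : Pol := ∑ d ∈ f.support, C (f.coeff d) * BmMono m a d

end

/-
Applying `BS i` (which sends `X i ↦ 0`, `X (i + 1) ↦ X i` and satisfies
`BS i ∘ swapVar i = BS (i + 1)`) to `(X i - X (i + 1)) * ddiff i f = f - swapVar i f` gives
`BS (i + 1) f - BS i f = X i * BS i (ddiff i f)`. Summing over `i < n` telescopes to
`f - BS 0 f` once `n` exceeds every variable of `f`, and for `f = S w` the divided differences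
are the `S (w * swap i (i + 1))` at descents and `0` elsewhere. At a descent `i`,
`w * swap i (i + 1)` has no descent at `i`, so its Schubert polynomial is `swapVar i`-invariant
and `BS (i + 1) = BS i ∘ swapVar i` agrees with `BS i` on it: this gives the second recursion.
-/

lemma mul_exactDiv_of_dvd {d f : Pol} (h : d ∣ f) : d * exactDiv d f = f := by
  have h' : ∃ g, d * g = f := h.imp fun _ hg => hg.symm
  rw [exactDiv, dif_pos h']
  exact h'.choose_spec

lemma BS_X (i j : ℕ) : BS i (X j) = if j < i then X j else if j = i then 0 else X (j - 1) := by
  simp [BS]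

lemma BS_comp_rename_swap (i : ℕ) :
    (BS i).comp (rename (Equiv.swap i (i + 1))) = BS (i + 1) := by
  refine algHom_ext fun j => ?_
  simp only [AlgHom.comp_apply, rename_X, BS_X]
  rcases eq_or_ne j i with rfl | hi
  · simp
  rcases eq_or_ne j (i + 1) with rfl | hi'
  · simp
  rw [Equiv.swap_apply_of_ne_of_ne hi hi']
  split_ifs <;> first | rfl | omega

lemma BS_swapVar (i : ℕ) (f : Pol) : BS i (swapVar i f) = BS (i + 1) f :=
  DFunLike.congr_fun (BS_comp_rename_swap i) f

lemma X_sub_X_dvd_sub_swapVar (i : ℕ) (f : Pol) : X i - X (i + 1) ∣ f - swapVar i f := by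
  induction f using MvPolynomial.induction_on with
  | C a => simp [swapVar]
  | add p q hp hq =>
    convert dvd_add hp hq using 1
    simp only [swapVar, map_add]
    ring
  | mul_X p n hp =>
    have hXn : X i - X (i + 1) ∣ X n - swapVar i (X n) := by
      simp only [swapVar, rename_X]
      rcases eq_or_ne n i with rfl | hi
      · simp
      rcases eq_or_ne n (i + 1) with rfl | hi'
      · exact ⟨-1, by simp⟩
      · simp [Equiv.swap_apply_of_ne_of_ne hi hi']
    convert dvd_add (dvd_mul_of_dvd_left hp (X n)) (dvd_mul_of_dvd_right hXn (swapVar i p)) using 1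
    simp only [swapVar, map_mul]
    ring

lemma X_sub_X_mul_ddiff (i : ℕ) (f : Pol) :
    (X i - X (i + 1)) * ddiff i f = f - swapVar i f :=
  mul_exactDiv_of_dvd (X_sub_X_dvd_sub_swapVar i f)

lemma BS_succ_sub_BS (i : ℕ) (f : Pol) :
    BS (i + 1) f - BS i f = X i * BS i (ddiff i f) := by
  have h := congrArg (BS i) (X_sub_X_mul_ddiff i f)
  rw [map_mul, map_sub, map_sub, BS_swapVar, BS_X, BS_X] at h
  simp only [lt_self_iff_false, ↓reduceIte, add_lt_iff_neg_left, not_lt_zero, Nat.add_eq_left,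
    one_ne_zero, add_tsub_cancel_right, zero_sub, neg_mul] at h
  linear_combination h

lemma swapVar_eq_self_of_ddiff_eq_zero {i : ℕ} {f : Pol} (h : ddiff i f = 0) :
    swapVar i f = f := by
  have := X_sub_X_mul_ddiff i f
  rw [h, mul_zero] at this
  exact (sub_eq_zero.mp this.symm).symm

lemma BS_succ_eq_of_ddiff_eq_zero {i : ℕ} {f : Pol} (h : ddiff i f = 0) :
    BS (i + 1) f = BS i f := by
  rw [← BS_swapVar, swapVar_eq_self_of_ddiff_eq_zero h]

lemma BS_eq_self_of_vars_subset {n : ℕ} {f : Pol} (hf : f.vars ⊆ Finset.range n) :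
    BS n f = f := by
  conv_rhs => rw [← aeval_X_left_apply f]
  refine eval₂Hom_congr' rfl (fun j hj _ => ?_) rfl
  simp [Finset.mem_range.mp (hf hj)]

theorem eq_BS_zero_add_finsum_X_mul_BS_ddiff (f : Pol) :
    f = BS 0 f + ∑ᶠ i, X i * BS i (ddiff i f) := by
  obtain ⟨n, hn⟩ := f.vars.exists_nat_subset_range
  have hsupp : Function.support (fun i => X i * BS i (ddiff i f)) ⊆ Finset.range n := by
    refine Function.support_subset_iff'.2 fun i hi => ?_
    have hni : n ≤ i := by simpa using hi
    rw [← BS_succ_sub_BS,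
      BS_eq_self_of_vars_subset (hn.trans (Finset.range_subset_range.2 (by omega))),
      BS_eq_self_of_vars_subset (hn.trans (Finset.range_subset_range.2 hni)), sub_self]
  rw [finsum_eq_sum_of_support_subset _ hsupp]
  simp_rw [← BS_succ_sub_BS]
  rw [Finset.sum_range_sub (fun i => BS i f), BS_eq_self_of_vars_subset hn]
  ring

lemma FinSupp.mul_swap {w : Equiv.Perm ℕ} (hw : FinSupp w) (i : ℕ) :
    FinSupp (w * Equiv.swap i (i + 1)) := by
  refine (hw.union ((Set.finite_singleton (i + 1)).insert i)).subset fun x hx => ?_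
  by_cases h : x = i ∨ x = i + 1
  · right; rcases h with h | h <;> simp [h]
  · left
    simpa [Equiv.swap_apply_of_ne_of_ne (not_or.mp h).1 (not_or.mp h).2] using hx

namespace IsSchubertFamily

variable {S : Equiv.Perm ℕ → Pol} {w : Equiv.Perm ℕ}

lemma finsum_X_mul_BS_ddiff (hS : IsSchubertFamily S) (hw : FinSupp w) :
    ∑ᶠ i, X i * BS i (ddiff i (S w)) =
      ∑ᶠ i ∈ {i : ℕ | w (i + 1) < w i}, X i * BS i (S (w * Equiv.swap i (i + 1))) := by
  rw [finsum_mem_def]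
  refine finsum_congr fun i => ?_
  rw [hS.2.2 w hw i, Set.indicator_apply]
  by_cases hi : w (i + 1) < w i <;> simp [hi]

lemma ddiff_mul_swap_eq_zero (hS : IsSchubertFamily S) (hw : FinSupp w) {i : ℕ}
    (hi : w (i + 1) < w i) :
    ddiff i (S (w * Equiv.swap i (i + 1))) = 0 := by
  rw [hS.2.2 _ (hw.mul_swap i) i, if_neg]
  simpa using hi.le

end IsSchubertFamily

/-- the recursions `𝔖_w = R₁𝔖_w + Σ_{i∈Des(w)} x_i·R_i(𝔖_{ws_i})` and
`𝔖_w = R₁𝔖_w + Σ_{i∈Des(w)} x_i·R_{i+1}(𝔖_{ws_i})`. -/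
theorem stmt_4 (S : Equiv.Perm ℕ → Pol) (hS : IsSchubertFamily S)
    (w : Equiv.Perm ℕ) (hw : FinSupp w) :
    (S w = BS 0 (S w) +
      ∑ᶠ i ∈ {i : ℕ | w (i+1) < w i}, X i * BS i (S (w * Equiv.swap i (i+1)))) ∧
    (S w = BS 0 (S w) +
      ∑ᶠ i ∈ {i : ℕ | w (i+1) < w i}, X i * BS (i+1) (S (w * Equiv.swap i (i+1)))) := by
  have hrec := eq_BS_zero_add_finsum_X_mul_BS_ddiff (S w)
  rw [hS.finsum_X_mul_BS_ddiff hw] at hrec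
  refine ⟨hrec, hrec.trans (congrArg _ (finsum_mem_congr rfl fun i hi => ?_))⟩
  rw [BS_succ_eq_of_ddiff_eq_zero (hS.ddiff_mul_swap_eq_zero hw hi)]
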